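/- Let A be a Ritt algebra (a differential ring containing ℚ) and ι : A → Â = O(Spec^Δ A) the canonical homomorphism into the ring of global sections of the structure sheaf on the differential spectrum. Then ι* : Spec^Δ Â → Spec^Δ A is a homeomorphism. -/

import Mathlib

/-- An ideal is a differential ideal w.r.t. a family of derivation maps `d`. -/
def IsDiffIdeal {A : Type*} [CommRing A] {k : ℕ} (d : Fin k → A → A) (I : Ideal A) : Prop :=
  ∀ i : Fin k, ∀ x ∈ I, d i x ∈ I

/-- The differential spectrum: prime differential ideals, with the Kolchin topology
(the subspace topology induced from the Zariski topology on `PrimeSpectrum`). -/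
abbrev DiffSpec {A : Type*} [CommRing A] {k : ℕ} (d : Fin k → A → A) :=
  {p : PrimeSpectrum A // IsDiffIdeal d p.asIdeal}

/-- A Keigher ring: the radical of every differential ideal is differential. -/
def IsKeigher {A : Type*} [CommRing A] {k : ℕ} (d : Fin k → A → A) : Prop :=
  ∀ I : Ideal A, IsDiffIdeal d I → IsDiffIdeal d I.radical

/-- `radDiffGen d E` is the smallest radical differential ideal containing `E`. -/
def radDiffGen {A : Type*} [CommRing A] {k : ℕ} (d : Fin k → A → A) (E : Set A) : Ideal A :=
  sInf {I : Ideal A | E ⊆ I ∧ I.IsRadical ∧ IsDiffIdeal d I}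

/-- A function `X → ⊔_p A_p` is regular if it is locally a quotient `a/b` with `b`
outside every prime differential ideal of the neighborhood. -/
def RegularLoc {A : Type*} [CommRing A] {k : ℕ} {d : Fin k → A → A}
    (f : ∀ p : DiffSpec d, Localization.AtPrime p.1.asIdeal) : Prop :=
  ∀ p : DiffSpec d, ∃ U : Set (DiffSpec d), IsOpen U ∧ p ∈ U ∧ ∃ a b : A,
    (∀ q ∈ U, b ∉ q.1.asIdeal) ∧
    ∀ q ∈ U, f q * algebraMap A (Localization.AtPrime q.1.asIdeal) b
      = algebraMap A (Localization.AtPrime q.1.asIdeal) a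
/-!
The inverse of `ι*` sends a prime differential ideal `p` of `A` to the ideal of global sections
whose germ at `p` lies in the maximal ideal of `A_p`; it is differential because that maximal
ideal is stable under the derivations of the stalk. That this really inverts `ι*` rests on a
nilpotency statement: a section `h` vanishing on the basic open `D(c)` has `ι(c) h` nilpotent.
To see it, cover `Spec^Δ A` by finitely many basic opens `D(e)` on which `h = a/b` (the Kolchin
topology is quasi-compact, since `1` in a radical differential ideal generated by a set already lies
in the one generated by a finite subset). On each patch `a/1` vanishes on `D(c e)`, and in a Ritt
algebra this forces `c e a` to be nilpotent: the elements `t` with `t a` nilpotent form a radical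
differential ideal, because the nilradical of a Ritt algebra is differential.
-/

section RadicalDifferentialIdeals

variable {A : Type*} [CommRing A] {k : ℕ}

lemma IsDiffIdeal.comap {R S : Type*} [CommRing R] [CommRing S] {dR : Fin k → R → R}
    {dS : Fin k → S → S} {I : Ideal S} (hI : IsDiffIdeal dS I) (f : R →+* S)
    (hf : ∀ i x, dS i (f x) = f (dR i x)) : IsDiffIdeal dR (I.comap f) := fun i x hx => by
  rw [Ideal.mem_comap, ← hf]
  exact hI i _ hx

lemma IsDiffIdeal.sSup_of_directedOn {d : Fin k → A → A} {S : Set (Ideal A)}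
    (hne : S.Nonempty) (hdir : DirectedOn (· ≤ ·) S) (hS : ∀ I ∈ S, IsDiffIdeal d I) :
    IsDiffIdeal d (sSup S) := by
  intro i x hx
  obtain ⟨I, hIS, hxI⟩ := (Submodule.mem_sSup_of_directed hne hdir).1 hx
  exact (Submodule.mem_sSup_of_directed hne hdir).2 ⟨I, hIS, hS I hIS i x hxI⟩

lemma Ideal.isRadical_sSup_of_directedOn {S : Set (Ideal A)} (hne : S.Nonempty)
    (hdir : DirectedOn (· ≤ ·) S) (hS : ∀ I ∈ S, I.IsRadical) : (sSup S).IsRadical := by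
  rintro x ⟨n, hx⟩
  obtain ⟨I, hIS, hxI⟩ := (Submodule.mem_sSup_of_directed hne hdir).1 hx
  exact (Submodule.mem_sSup_of_directed hne hdir).2 ⟨I, hIS, hS I hIS ⟨n, hxI⟩⟩

lemma Ideal.IsRadical.colon_singleton {I : Ideal A} (hI : I.IsRadical) (b : A) :
    (I.colon {b}).IsRadical := by
  rintro t ⟨n, ht⟩
  rw [Submodule.mem_colon_singleton, smul_eq_mul] at ht ⊢
  have hpow : (t * b) ^ (n + 1) = t ^ n * b * (t * b ^ n) := by ring
  exact hI ⟨n + 1, hpow ▸ I.mul_mem_right _ ht⟩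

lemma Ideal.IsPrime.mem_iff_of_mul_sub_mem {P : Ideal A} (hP : P.IsPrime) {x u y : A}
    (hu : u ∉ P) (h : x * u - y ∈ P) : x ∈ P ↔ y ∈ P := by
  constructor
  · intro hx
    simpa using P.sub_mem (P.mul_mem_right u hx) h
  · intro hy
    have hxu : x * u ∈ P := by simpa using P.add_mem h hy
    exact (hP.mem_or_mem hxu).resolve_right hu

lemma Derivation.mul_apply_mem_of_mul_mem (D : Derivation ℤ A A) {I : Ideal A}
    (hrad : I.IsRadical) (hI : ∀ x ∈ I, D x ∈ I) {a b : A} (hab : a * b ∈ I) :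
    a * D b ∈ I := by
  have hsq : (a * D b) * (a * D b) = (a * D b) * D (a * b) - (a * b) * (D a * D b) := by
    rw [Derivation.leibniz, smul_eq_mul, smul_eq_mul]
    ring
  exact hrad ⟨2, by
    rw [pow_two, hsq]
    exact I.sub_mem (I.mul_mem_left _ (hI _ hab)) (I.mul_mem_right _ hab)⟩

lemma IsDiffIdeal.colon_singleton (δ : Fin k → Derivation ℤ A A) {I : Ideal A}
    (hrad : I.IsRadical) (hI : IsDiffIdeal (fun i => ⇑(δ i)) I) (b : A) :
    IsDiffIdeal (fun i => ⇑(δ i)) (I.colon {b}) := by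
  intro i t ht
  rw [Submodule.mem_colon_singleton, smul_eq_mul, mul_comm] at ht ⊢
  exact (δ i).mul_apply_mem_of_mul_mem hrad (hI i) ht

/-- Zorn's lemma gives a radical differential ideal `M ⊇ I` maximal with `c ∉ M`; for `x, y ∉ M`
with `x y ∈ M`, maximality applied to the colon ideals `M : x` and then `M : c` puts `x` in `M`. -/
theorem exists_diffSpec_le_of_notMem (δ : Fin k → Derivation ℤ A A) {I : Ideal A}
    (hrad : I.IsRadical) (hI : IsDiffIdeal (fun i => ⇑(δ i)) I) {c : A} (hc : c ∉ I) :
    ∃ P : DiffSpec (fun i => ⇑(δ i)), I ≤ P.1.asIdeal ∧ c ∉ P.1.asIdeal := by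
  let S : Set (Ideal A) := {J | J.IsRadical ∧ IsDiffIdeal (fun i => ⇑(δ i)) J ∧ c ∉ J}
  have hchains :
      ∀ ch ⊆ S, IsChain (· ≤ ·) ch → ∀ J ∈ ch, ∃ ub ∈ S, ∀ K ∈ ch, K ≤ ub := by
    intro ch hchS hchain J hJ
    have hne : ch.Nonempty := ⟨J, hJ⟩
    have hdir := hchain.directedOn
    refine ⟨sSup ch, ⟨Ideal.isRadical_sSup_of_directedOn hne hdir fun K hK => (hchS hK).1,
      IsDiffIdeal.sSup_of_directedOn hne hdir fun K hK => (hchS hK).2.1, fun hcM => ?_⟩,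
      fun K hK => le_sSup hK⟩
    obtain ⟨K, hK, hcK⟩ := (Submodule.mem_sSup_of_directed hne hdir).1 hcM
    exact (hchS hK).2.2 hcK
  obtain ⟨M, hIM, hM⟩ := zorn_le_nonempty₀ S hchains I ⟨hrad, hI, hc⟩
  obtain ⟨hMrad, hMdiff, hcM⟩ := hM.prop
  have colon_eq (z : A) (hcz : c ∉ M.colon {z}) : M.colon {z} = M :=
    (hM.eq_of_le ⟨hMrad.colon_singleton z, hMdiff.colon_singleton δ hMrad z, hcz⟩
      fun t ht => by
        rw [Submodule.mem_colon_singleton, smul_eq_mul]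
        exact M.mul_mem_right z ht).symm
  have hprime : M.IsPrime := by
    refine ⟨fun htop => hcM (htop ▸ Submodule.mem_top), fun {x y} hxy => ?_⟩
    by_contra! hxy'
    have hcx : c * x ∈ M := by
      by_contra hcx
      have hy : y ∈ M.colon {x} := by
        rwa [Submodule.mem_colon_singleton, smul_eq_mul, mul_comm]
      exact hxy'.2 (colon_eq x (by rwa [Submodule.mem_colon_singleton]) ▸ hy)
    have hcc : c ∉ M.colon {c} := by
      rw [Submodule.mem_colon_singleton, smul_eq_mul]
      exact fun h => hcM (hMrad ⟨2, by rwa [pow_two]⟩)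
    have hx : x ∈ M.colon {c} := by
      rwa [Submodule.mem_colon_singleton, smul_eq_mul, mul_comm]
    exact hxy'.1 (colon_eq c hcc ▸ hx)
  exact ⟨⟨⟨M, hprime⟩, hMdiff⟩, hIM, hcM⟩

end RadicalDifferentialIdeals

section RadDiffGen

variable {A : Type*} [CommRing A] {k : ℕ} (d : Fin k → A → A)

lemma subset_radDiffGen (E : Set A) : E ⊆ radDiffGen d E := fun _ hx =>
  Ideal.mem_sInf.2 fun _ hI => hI.1 hx

lemma radDiffGen_le {E : Set A} {I : Ideal A} (hE : E ⊆ I) (hrad : I.IsRadical)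
    (hI : IsDiffIdeal d I) : radDiffGen d E ≤ I :=
  sInf_le ⟨hE, hrad, hI⟩

lemma radDiffGen_isRadical (E : Set A) : (radDiffGen d E).IsRadical := by
  rintro x ⟨n, hx⟩
  exact Ideal.mem_sInf.2 fun I hI => hI.2.1 ⟨n, Ideal.mem_sInf.1 hx hI⟩

lemma isDiffIdeal_radDiffGen (E : Set A) : IsDiffIdeal d (radDiffGen d E) := fun i _ hx =>
  Ideal.mem_sInf.2 fun _ hI => hI.2.2 i _ (Ideal.mem_sInf.1 hx hI)

lemma radDiffGen_mono {E F : Set A} (h : E ⊆ F) : radDiffGen d E ≤ radDiffGen d F :=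
  radDiffGen_le d (h.trans (subset_radDiffGen d F)) (radDiffGen_isRadical d F)
    (isDiffIdeal_radDiffGen d F)

end RadDiffGen

/-- Quasi-compactness of the Kolchin topology, for covers by basic opens `D(c i)`. -/
theorem DiffSpec.exists_finset_forall_notMem {A ι : Type*} [CommRing A] {k : ℕ}
    (δ : Fin k → Derivation ℤ A A) (c : ι → A)
    (h : ∀ r : DiffSpec (fun i => ⇑(δ i)), ∃ i, c i ∉ r.1.asIdeal) :
    ∃ s : Finset ι, ∀ r : DiffSpec (fun i => ⇑(δ i)), ∃ i ∈ s, c i ∉ r.1.asIdeal := by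
  classical
  let F : Finset ι → Ideal A := fun s => radDiffGen (fun i => ⇑(δ i)) (c '' s)
  have hF : Monotone F := fun s t hst =>
    radDiffGen_mono _ (Set.image_mono (Finset.coe_subset.2 hst))
  have hne : (Set.range F).Nonempty := Set.range_nonempty F
  have hdir : DirectedOn (· ≤ ·) (Set.range F) := directedOn_range.2 hF.directed_le
  by_cases h1 : (1 : A) ∈ sSup (Set.range F)
  · obtain ⟨_, ⟨s, rfl⟩, h1s⟩ := (Submodule.mem_sSup_of_directed hne hdir).1 h1
    refine ⟨s, fun r => ?_⟩
    by_contra! hsr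
    have hFr : F s ≤ r.1.asIdeal := radDiffGen_le _ (by rintro _ ⟨i, hi, rfl⟩; exact hsr i hi)
      r.1.isPrime.isRadical r.2
    exact r.1.isPrime.ne_top ((Ideal.eq_top_iff_one _).2 (hFr h1s))
  · have hrad : (sSup (Set.range F)).IsRadical :=
      Ideal.isRadical_sSup_of_directedOn hne hdir (by
        rintro _ ⟨s, rfl⟩
        exact radDiffGen_isRadical _ _)
    have hdiff : IsDiffIdeal (fun i => ⇑(δ i)) (sSup (Set.range F)) :=
      IsDiffIdeal.sSup_of_directedOn hne hdir (by
        rintro _ ⟨s, rfl⟩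
        exact isDiffIdeal_radDiffGen _ _)
    obtain ⟨P, hUP, -⟩ := exists_diffSpec_le_of_notMem δ hrad hdiff h1
    obtain ⟨i, hi⟩ := h P
    have hiF : c i ∈ F {i} := subset_radDiffGen _ _ ⟨i, by simp, rfl⟩
    exact (hi (hUP (le_sSup (Set.mem_range_self (f := F) {i}) hiF))).elim

section RittAlgebra

variable {A : Type*} [CommRing A] [Algebra ℚ A] {k : ℕ}

lemma isUnit_natCast_of_algebraRat {n : ℕ} (hn : n ≠ 0) : IsUnit (n : A) := by
  have hnQ : IsUnit (n : ℚ) := isUnit_iff_ne_zero.2 (Nat.cast_ne_zero.2 hn)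
  simpa using hnQ.map (algebraMap ℚ A)

/-- Differentiating `a ^ (j + 1) * (D a) ^ (2 m + 1) ∈ I` and multiplying by `D a` lowers the
power of `a` by one and raises that of `D a` by two; dividing by `j + 1` needs `ℚ ⊆ A`. -/
lemma Derivation.pow_mul_apply_pow_mem (D : Derivation ℤ A A) {I : Ideal A}
    (hI : ∀ x ∈ I, D x ∈ I) {a : A} (m : ℕ) :
    ∀ j : ℕ, a ^ (j + m + 1) ∈ I → a ^ j * D a ^ (2 * m + 1) ∈ I := by
  induction m with
  | zero =>
    intro j ha
    have hd : ((j + 1 : ℕ) : A) * (a ^ j * D a ^ (2 * 0 + 1)) = D (a ^ (j + 1)) := by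
      rw [Derivation.leibniz_pow, Nat.add_sub_cancel, nsmul_eq_mul, smul_eq_mul]
      ring
    rw [← Ideal.unit_mul_mem_iff_mem I (isUnit_natCast_of_algebraRat j.succ_ne_zero), hd]
    exact hI _ ha
  | succ m ih =>
    intro j ha
    have hprev := ih (j + 1) (by rwa [show j + 1 + m + 1 = j + (m + 1) + 1 by ring])
    have hd : ((j + 1 : ℕ) : A) * (a ^ j * D a ^ (2 * (m + 1) + 1))
        = D a * D (a ^ (j + 1) * D a ^ (2 * m + 1))
          - ((2 * m + 1 : ℕ) : A) * D (D a) * (a ^ (j + 1) * D a ^ (2 * m + 1)) := by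
      rw [Derivation.leibniz, Derivation.leibniz_pow, Derivation.leibniz_pow]
      simp only [Nat.add_sub_cancel, nsmul_eq_mul, smul_eq_mul]
      ring
    rw [← Ideal.unit_mul_mem_iff_mem I (isUnit_natCast_of_algebraRat j.succ_ne_zero), hd]
    exact I.sub_mem (I.mul_mem_left _ (hI _ hprev)) (I.mul_mem_left _ hprev)

theorem isKeigher_of_algebraRat (δ : Fin k → Derivation ℤ A A) :
    IsKeigher (fun i => ⇑(δ i)) := by
  rintro I hI i x ⟨n, hx⟩
  have hx' : x ^ (0 + n + 1) ∈ I := I.pow_mem_of_pow_mem hx (by omega)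
  exact ⟨2 * n + 1, by simpa using (δ i).pow_mul_apply_pow_mem (hI i) n 0 hx'⟩

lemma isDiffIdeal_nilradical (δ : Fin k → Derivation ℤ A A) :
    IsDiffIdeal (fun i => ⇑(δ i)) (nilradical A) :=
  isKeigher_of_algebraRat δ ⊥ fun i _ hx => by
    rw [Ideal.mem_bot.1 hx]
    exact Ideal.mem_bot.2 (map_zero (δ i))

/-- The ideal `{t | t x nilpotent}` is radical and differential, so if `s` is outside it, some
prime differential `r` contains it but not `s`; there `x / 1 = 0` gives `u ∉ r` with `u x = 0`. -/
theorem isNilpotent_mul_of_algebraMap_eq_zero (δ : Fin k → Derivation ℤ A A) {s x : A}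
    (h : ∀ r : DiffSpec (fun i => ⇑(δ i)), s ∉ r.1.asIdeal →
      algebraMap A (Localization.AtPrime r.1.asIdeal) x = 0) :
    IsNilpotent (s * x) := by
  by_contra hsx
  have hs : s ∉ (nilradical A).colon {x} := by
    rwa [Submodule.mem_colon_singleton, smul_eq_mul, mem_nilradical]
  have hrad : (nilradical A).IsRadical := Ideal.radical_isRadical ⊥
  obtain ⟨r, hr, hsr⟩ := exists_diffSpec_le_of_notMem δ (hrad.colon_singleton x)
    ((isDiffIdeal_nilradical δ).colon_singleton δ hrad x) hs
  obtain ⟨u, hu⟩ := (IsLocalization.map_eq_zero_iff r.1.asIdeal.primeCompl _ x).1 (h r hsr)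
  refine u.2 (hr ?_)
  rw [Submodule.mem_colon_singleton, smul_eq_mul, hu]
  exact (nilradical A).zero_mem

end RittAlgebra

/-- Writing `x = a / s`, the Leibniz rule gives `s · D x = D a - x · D s`, which lies in the
maximal ideal when `x` does. -/
theorem isDiffIdeal_maximalIdeal_localization {A : Type*} [CommRing A] {k : ℕ}
    (δ : Fin k → Derivation ℤ A A) (p : DiffSpec (fun i => ⇑(δ i)))
    (δL : Fin k → Derivation ℤ (Localization.AtPrime p.1.asIdeal)
      (Localization.AtPrime p.1.asIdeal))
    (hδL : ∀ i a, δL i (algebraMap A _ a) = algebraMap A _ (δ i a)) :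
    IsDiffIdeal (fun i => ⇑(δL i))
      (IsLocalRing.maximalIdeal (Localization.AtPrime p.1.asIdeal)) := by
  intro i x hx
  obtain ⟨⟨a, s⟩, hxs⟩ := IsLocalization.surj p.1.asIdeal.primeCompl x
  have hmem (y : A) : algebraMap A (Localization.AtPrime p.1.asIdeal) y ∈
      IsLocalRing.maximalIdeal _ ↔ y ∈ p.1.asIdeal :=
    IsLocalization.AtPrime.to_map_mem_maximal_iff _ _ y
  have ha : a ∈ p.1.asIdeal := by
    rw [← hmem, ← hxs]
    exact Ideal.mul_mem_right _ _ hx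
  have hd : algebraMap A _ (s : A) * δL i x
      = algebraMap A _ (δ i a) - x * algebraMap A _ (δ i s) := by
    rw [← hδL, ← hδL, ← hxs, Derivation.leibniz, smul_eq_mul, smul_eq_mul]
    ring
  rw [← Ideal.unit_mul_mem_iff_mem _ ((IsLocalization.AtPrime.isUnit_to_map_iff _ _ _).2 s.2), hd]
  exact Ideal.sub_mem _ ((hmem _).2 (p.2 i a ha)) (Ideal.mul_mem_right _ _ hx)

namespace RegularLoc

variable {A : Type*} [CommRing A] {k : ℕ} {d : Fin k → A → A}
  {f : ∀ p : DiffSpec d, Localization.AtPrime p.1.asIdeal}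

theorem exists_basicOpen (hf : RegularLoc f) (p : DiffSpec d) :
    ∃ c a b : A, c ∉ p.1.asIdeal ∧ ∀ r : DiffSpec d, c ∉ r.1.asIdeal →
      b ∉ r.1.asIdeal ∧ f r * algebraMap A _ b = algebraMap A _ a := by
  obtain ⟨U, hU, hpU, a, b, hb, hfab⟩ := hf p
  obtain ⟨V, hV, rfl⟩ := isOpen_induced_iff.1 hU
  obtain ⟨_, ⟨c, rfl⟩, hpc, hcV⟩ :=
    PrimeSpectrum.isTopologicalBasis_basic_opens.exists_subset_of_mem_open hpU hV
  exact ⟨c, a, b, hpc, fun r hr => ⟨hb r (hcV hr), hfab r (hcV hr)⟩⟩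

theorem isOpen_setOf_isUnit (hf : RegularLoc f) : IsOpen {p | IsUnit (f p)} := by
  refine isOpen_iff_forall_mem_open.2 fun p hp => ?_
  obtain ⟨c, a, b, hpc, hcab⟩ := hf.exists_basicOpen p
  have hunit {r : DiffSpec d} {y : A} : IsUnit (algebraMap A (Localization.AtPrime r.1.asIdeal) y)
      ↔ y ∉ r.1.asIdeal :=
    IsLocalization.AtPrime.isUnit_to_map_iff _ _ y
  have hpa : a ∉ p.1.asIdeal := by
    rw [← hunit, ← (hcab p hpc).2]
    exact hp.mul (hunit.2 (hcab p hpc).1)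
  let V := PrimeSpectrum.basicOpen c ⊓ PrimeSpectrum.basicOpen a
  refine ⟨Subtype.val ⁻¹' (V : Set (PrimeSpectrum A)), fun r hr => ?_,
    V.isOpen.preimage continuous_subtype_val, ⟨hpc, hpa⟩⟩
  obtain ⟨hrc, hra⟩ : c ∉ r.1.asIdeal ∧ a ∉ r.1.asIdeal := hr
  have hfab := hunit.2 hra
  rw [← (hcab r hrc).2] at hfab
  exact isUnit_of_mul_isUnit_left hfab

end RegularLoc

/-- On a basic open `D(e)` where `f = a / b`, `(c f)^N (b e)^N = (c e a)^N`. -/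
theorem RegularLoc.exists_pow_eq_zero {A : Type*} [CommRing A] [Algebra ℚ A] {k : ℕ}
    {δ : Fin k → Derivation ℤ A A}
    {f : ∀ p : DiffSpec (fun i => ⇑(δ i)), Localization.AtPrime p.1.asIdeal}
    (hf : RegularLoc f) {c : A} (hvan : ∀ r : DiffSpec (fun i => ⇑(δ i)), c ∉ r.1.asIdeal → f r = 0) :
    ∃ N : ℕ, ∀ r : DiffSpec (fun i => ⇑(δ i)), (algebraMap A _ c * f r) ^ N = 0 := by
  choose e a b he hab using hf.exists_basicOpen
  obtain ⟨s, hs⟩ := DiffSpec.exists_finset_forall_notMem δ e fun r => ⟨r, he r⟩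
  have hnil (p : DiffSpec (fun i => ⇑(δ i))) : IsNilpotent (c * e p * a p) := by
    refine isNilpotent_mul_of_algebraMap_eq_zero δ fun r hr => ?_
    have hrc : c ∉ r.1.asIdeal := fun h => hr (Ideal.mul_mem_right _ _ h)
    have hre : e p ∉ r.1.asIdeal := fun h => hr (Ideal.mul_mem_left _ _ h)
    rw [← (hab p r hre).2, hvan r hrc, zero_mul]
  choose n hn using hnil
  refine ⟨s.sup n, fun r => ?_⟩
  obtain ⟨p, hps, hpr⟩ := hs r
  obtain ⟨hbr, hfab⟩ := hab p r hpr
  have hunit : IsUnit (algebraMap A (Localization.AtPrime r.1.asIdeal) (b p * e p) ^ s.sup n) :=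
    ((IsLocalization.AtPrime.isUnit_to_map_iff _ _ _).2
      (r.1.asIdeal.primeCompl.mul_mem hbr hpr)).pow _
  have hprod : algebraMap A _ c * f r * algebraMap A _ (b p * e p)
      = algebraMap A _ (c * e p * a p) := by
    rw [map_mul, map_mul, map_mul, ← hfab]
    ring
  rw [← hunit.mul_left_eq_zero, ← mul_pow, hprod, ← map_pow,
    pow_eq_zero_of_le (Finset.le_sup hps) (hn p), map_zero]

namespace DiffSpec

variable {R S : Type*} [CommRing R] [CommRing S] {k : ℕ} {dR : Fin k → R → R}
  {dS : Fin k → S → S}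

def comap (f : R →+* S) (hf : ∀ i x, dS i (f x) = f (dR i x)) (q : DiffSpec dS) : DiffSpec dR :=
  ⟨PrimeSpectrum.comap f q.1, q.2.comap f hf⟩

lemma continuous_comap (f : R →+* S) (hf : ∀ i x, dS i (f x) = f (dR i x)) :
    Continuous (comap f hf) :=
  ((PrimeSpectrum.continuous_comap f).comp continuous_subtype_val).subtype_mk _

end DiffSpec

section GlobalSections

variable {A : Type*} [CommRing A] {k : ℕ} {δ : Fin k → Derivation ℤ A A}
  (D : Subring (∀ p : DiffSpec (fun i => ⇑(δ i)), Localization.AtPrime p.1.asIdeal))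
  (himg : ∀ a : A,
    (fun p : DiffSpec (fun i => ⇑(δ i)) => algebraMap A (Localization.AtPrime p.1.asIdeal) a) ∈ D)
  {δL : ∀ p : DiffSpec (fun i => ⇑(δ i)),
    Fin k → Derivation ℤ (Localization.AtPrime p.1.asIdeal) (Localization.AtPrime p.1.asIdeal)}
  {dD : Fin k → D → D}

def toSections : A →+* D :=
  RingHom.codRestrict (RingHom.pi fun p : DiffSpec (fun i => ⇑(δ i)) =>
    algebraMap A (Localization.AtPrime p.1.asIdeal)) D himg

def stalkEval (p : DiffSpec (fun i => ⇑(δ i))) : D →+* Localization.AtPrime p.1.asIdeal :=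
  (Pi.evalRingHom _ p).comp D.subtype

lemma toSections_deriv
    (hδL : ∀ (p : DiffSpec (fun i => ⇑(δ i))) (i : Fin k) (a : A),
      δL p i (algebraMap A (Localization.AtPrime p.1.asIdeal) a)
        = algebraMap A (Localization.AtPrime p.1.asIdeal) (δ i a))
    (hdD : ∀ i (x : D) (p : DiffSpec (fun i => ⇑(δ i))),
      ((dD i x : D) : ∀ p, Localization.AtPrime p.1.asIdeal) p
        = δL p i (((x : D) : ∀ p, Localization.AtPrime p.1.asIdeal) p))
    (i : Fin k) (a : A) :
    dD i (toSections D himg a) = toSections D himg (δ i a) :=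
  Subtype.ext (funext fun p => (hdD i _ p).trans (hδL p i a))

variable (hδL : ∀ (p : DiffSpec (fun i => ⇑(δ i))) (i : Fin k) (a : A),
    δL p i (algebraMap A (Localization.AtPrime p.1.asIdeal) a)
      = algebraMap A (Localization.AtPrime p.1.asIdeal) (δ i a))
  (hdD : ∀ i (x : D) (p : DiffSpec (fun i => ⇑(δ i))),
    ((dD i x : D) : ∀ p, Localization.AtPrime p.1.asIdeal) p
      = δL p i (((x : D) : ∀ p, Localization.AtPrime p.1.asIdeal) p))

def stalkPrime (p : DiffSpec (fun i => ⇑(δ i))) : DiffSpec dD :=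
  ⟨PrimeSpectrum.comap (stalkEval D p) (IsLocalRing.closedPoint _),
    (isDiffIdeal_maximalIdeal_localization δ p (δL p) (hδL p)).comap (stalkEval D p)
      fun i x => (hdD i x p).symm⟩

lemma comap_stalkPrime (p : DiffSpec (fun i => ⇑(δ i))) :
    DiffSpec.comap (toSections D himg) (toSections_deriv D himg hδL hdD)
      (stalkPrime D hδL hdD p) = p :=
  Subtype.ext (PrimeSpectrum.ext (Ideal.ext fun a =>
    IsLocalization.AtPrime.to_map_mem_maximal_iff _ p.1.asIdeal a))

/-- Near `p = ι* q` write `f = a / b` on `D(c)`; then `f ι(b) - ι(a)` vanishes on `D(c)`, so it is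
killed by a power of `ι(c) ∉ q` and lies in `q`. Hence `f ∈ q ↔ a ∈ p ↔ f_p ∈ 𝔪_p`. -/
lemma stalkPrime_comap [Algebra ℚ A] (hreg : ∀ f ∈ D, RegularLoc f) (q : DiffSpec dD) :
    stalkPrime D hδL hdD
      (DiffSpec.comap (toSections D himg) (toSections_deriv D himg hδL hdD) q) = q := by
  set ι := toSections D himg
  set p := DiffSpec.comap ι (toSections_deriv D himg hδL hdD) q
  refine Subtype.ext (PrimeSpectrum.ext (Ideal.ext fun f => ?_))
  obtain ⟨c, a, b, hpc, hcab⟩ := (hreg f f.2).exists_basicOpen p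
  obtain ⟨hpb, hfab⟩ := hcab p hpc
  have hvan (r : DiffSpec (fun i => ⇑(δ i))) (hr : c ∉ r.1.asIdeal) :
      ((f * ι b - ι a : D) : ∀ p, Localization.AtPrime p.1.asIdeal) r = 0 :=
    sub_eq_zero.2 (hcab r hr).2
  obtain ⟨N, hN⟩ := (hreg _ (f * ι b - ι a).2).exists_pow_eq_zero hvan
  have hq : f * ι b - ι a ∈ q.1.asIdeal := by
    have hpow : (ι c * (f * ι b - ι a)) ^ N = 0 := Subtype.ext (funext hN)
    have hcq : ι c * (f * ι b - ι a) ∈ q.1.asIdeal :=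
      q.1.isPrime.mem_of_pow_mem N (hpow ▸ q.1.asIdeal.zero_mem)
    exact (q.1.isPrime.mem_or_mem hcq).resolve_left hpc
  have hgerm : (f : ∀ p, Localization.AtPrime p.1.asIdeal) p * algebraMap A _ b
      - algebraMap A _ a ∈ IsLocalRing.maximalIdeal (Localization.AtPrime p.1.asIdeal) := by
    rw [sub_eq_zero.2 hfab]
    exact Ideal.zero_mem _
  have hmem (y : A) : algebraMap A (Localization.AtPrime p.1.asIdeal) y ∈
      IsLocalRing.maximalIdeal _ ↔ y ∈ p.1.asIdeal :=
    IsLocalization.AtPrime.to_map_mem_maximal_iff _ _ y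
  change (f : ∀ p, Localization.AtPrime p.1.asIdeal) p ∈ IsLocalRing.maximalIdeal _ ↔
    f ∈ q.1.asIdeal
  rw [(IsLocalRing.maximalIdeal.isMaximal _).isPrime.mem_iff_of_mul_sub_mem
      (mt (hmem b).1 hpb) hgerm, hmem, q.1.isPrime.mem_iff_of_mul_sub_mem hpb hq]
  rfl

lemma continuous_stalkPrime (hreg : ∀ f ∈ D, RegularLoc f) :
    Continuous (stalkPrime D hδL hdD) := by
  refine Continuous.subtype_mk (PrimeSpectrum.isTopologicalBasis_basic_opens.continuous_iff.2 ?_) _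
  rintro _ ⟨g, rfl⟩
  have hpre : (fun p => (stalkPrime D hδL hdD p).1) ⁻¹' PrimeSpectrum.basicOpen g =
      {p | IsUnit ((g : ∀ p, Localization.AtPrime p.1.asIdeal) p)} :=
    Set.ext fun p => IsLocalRing.notMem_maximalIdeal
  exact hpre ▸ (hreg g g.2).isOpen_setOf_isUnit

end GlobalSections

theorem stmt16_general {A : Type*} [CommRing A] [Algebra ℚ A] {k : ℕ}
    (δ : Fin k → Derivation ℤ A A)
    (δL : ∀ p : DiffSpec (fun i => ⇑(δ i)),
      Fin k → Derivation ℤ (Localization.AtPrime p.1.asIdeal) (Localization.AtPrime p.1.asIdeal))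
    (hδL : ∀ (p : DiffSpec (fun i => ⇑(δ i))) (i : Fin k) (a : A),
      δL p i (algebraMap A (Localization.AtPrime p.1.asIdeal) a)
        = algebraMap A (Localization.AtPrime p.1.asIdeal) (δ i a))
    (D : Subring (∀ p : DiffSpec (fun i => ⇑(δ i)), Localization.AtPrime p.1.asIdeal))
    (hmem : ∀ f, f ∈ D ↔ RegularLoc f)
    (himg : ∀ a : A,
      (fun p : DiffSpec (fun i => ⇑(δ i)) => algebraMap A (Localization.AtPrime p.1.asIdeal) a) ∈ D)
    (dD : Fin k → D → D)
    (hdD : ∀ i (x : D) (p : DiffSpec (fun i => ⇑(δ i))),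
      ((dD i x : D) : ∀ p, Localization.AtPrime p.1.asIdeal) p
        = δL p i (((x : D) : ∀ p, Localization.AtPrime p.1.asIdeal) p)) :
    ∃ h : DiffSpec dD ≃ₜ DiffSpec (fun i => ⇑(δ i)),
      ∀ q, (h q).1.asIdeal = Ideal.comap
        (RingHom.codRestrict
          (Pi.ringHom fun p : DiffSpec (fun i => ⇑(δ i)) =>
            algebraMap A (Localization.AtPrime p.1.asIdeal)) D himg) q.1.asIdeal := by
  have hreg : ∀ f ∈ D, RegularLoc f := fun f hf => (hmem f).1 hf
  exact ⟨{ toFun := DiffSpec.comap (toSections D himg) (toSections_deriv D himg hδL hdD)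
           invFun := stalkPrime D hδL hdD
           left_inv := stalkPrime_comap D himg hδL hdD hreg
           right_inv := comap_stalkPrime D himg hδL hdD
           continuous_toFun := DiffSpec.continuous_comap _ _
           continuous_invFun := continuous_stalkPrime D hδL hdD hreg }, fun _ => rfl⟩

/-- For a Ritt algebra `A` (a differential ring containing `ℚ`), the contraction map
`ι* : Spec^Δ Â → Spec^Δ A` along the canonical map `ι : A → Â = O(X)` into the ring of
global sections of the structure sheaf (here `D`, the subring of exactly the everywhere
regular functions) is a homeomorphism. -/
theorem stmt16 {A : Type*} [CommRing A] [Algebra ℚ A] {k : ℕ}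
    (δ : Fin k → Derivation ℤ A A)
    (hcomm : ∀ i j a, δ i (δ j a) = δ j (δ i a))
    (δL : ∀ p : DiffSpec (fun i => ⇑(δ i)),
      Fin k → Derivation ℤ (Localization.AtPrime p.1.asIdeal) (Localization.AtPrime p.1.asIdeal))
    (hδL : ∀ (p : DiffSpec (fun i => ⇑(δ i))) (i : Fin k) (a : A),
      δL p i (algebraMap A (Localization.AtPrime p.1.asIdeal) a)
        = algebraMap A (Localization.AtPrime p.1.asIdeal) (δ i a))
    (D : Subring (∀ p : DiffSpec (fun i => ⇑(δ i)), Localization.AtPrime p.1.asIdeal))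
    (hmem : ∀ f, f ∈ D ↔ RegularLoc f)
    (himg : ∀ a : A,
      (fun p : DiffSpec (fun i => ⇑(δ i)) => algebraMap A (Localization.AtPrime p.1.asIdeal) a) ∈ D)
    (hclosed : ∀ f ∈ D, ∀ i, (fun p => δL p i (f p)) ∈ D)
    (dD : Fin k → D → D)
    (hdD : ∀ i (x : D) (p : DiffSpec (fun i => ⇑(δ i))),
      ((dD i x : D) : ∀ p, Localization.AtPrime p.1.asIdeal) p
        = δL p i (((x : D) : ∀ p, Localization.AtPrime p.1.asIdeal) p)) :
    ∃ h : DiffSpec dD ≃ₜ DiffSpec (fun i => ⇑(δ i)),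
      ∀ q, (h q).1.asIdeal = Ideal.comap
        (RingHom.codRestrict
          (Pi.ringHom fun p : DiffSpec (fun i => ⇑(δ i)) =>
            algebraMap A (Localization.AtPrime p.1.asIdeal)) D himg) q.1.asIdeal :=
  stmt16_general δ δL hδL D hmem himg dD hdD
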